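/- Let G be a hole-free and paraglider-free graph and A an induced subgraph of G isomorphic to the complement of C6. If a vertex x outside A has exactly three neighbors in A, then these three neighbors form a triangle in A (i.e., they are one of the two triangles of A). -/
import Mathlib


open SimpleGraph

/-- `H` occurs as an induced subgraph of `G`. -/
def HasInducedCopy {V W : Type} (G : SimpleGraph V) (H : SimpleGraph W) : Prop :=
  Nonempty (H ↪g G)

/-- `G` has no induced chordless cycle with at least 5 vertices. -/
def HoleFree {V : Type} (G : SimpleGraph V) : Prop :=
  ∀ n : ℕ, 5 ≤ n → ¬ HasInducedCopy G (cycleGraph n)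

/-- the disjoint union of a `P₂` and a `P₃`. -/
def p2p3 : SimpleGraph (Fin 5) :=
  SimpleGraph.fromRel (fun i j => (i, j) ∈ ([(0,1),(2,3),(3,4)] : List (Fin 5 × Fin 5)))

/-- the paraglider: a diamond on `0,1,2,3` (missing edge `2-3`) plus vertex `4` seeing `2,3`. -/
def paraglider : SimpleGraph (Fin 5) :=
  SimpleGraph.fromRel
    (fun i j => (i, j) ∈ ([(0,1),(0,2),(0,3),(1,2),(1,3),(4,2),(4,3)] : List (Fin 5 × Fin 5)))

/-- the diamond `K₄ - e`. -/
def diamond : SimpleGraph (Fin 4) :=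
  SimpleGraph.fromRel
    (fun i j => (i, j) ∈ ([(0,1),(0,2),(0,3),(1,2),(1,3)] : List (Fin 4 × Fin 4)))

/-- three independent edges. -/
def threeK2 : SimpleGraph (Fin 6) :=
  SimpleGraph.fromRel (fun i j => (i, j) ∈ ([(0,1),(2,3),(4,5)] : List (Fin 6 × Fin 6)))

/-- the matched co-bipartite graph: two cliques of size `k` joined by a perfect matching. -/
def matchedCoBip (k : ℕ) : SimpleGraph (Fin k ⊕ Fin k) :=
  SimpleGraph.fromRel (fun x y =>
    (∃ i j, x = Sum.inl i ∧ y = Sum.inl j) ∨ (∃ i j, x = Sum.inr i ∧ y = Sum.inr j) ∨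
    (∃ i, x = Sum.inl i ∧ y = Sum.inr i))

/-- `G` has no induced hole and no induced antihole. -/
def WeaklyChordal {V : Type} (G : SimpleGraph V) : Prop :=
  ∀ n : ℕ, 5 ≤ n →
    ¬ HasInducedCopy G (cycleGraph n) ∧ ¬ HasInducedCopy G (cycleGraph n)ᶜ

/-- a clique `K` whose removal disconnects the graph. -/
def HasCliqueSeparator {V : Type} (G : SimpleGraph V) : Prop :=
  ∃ K : Set V, G.IsClique K ∧ ¬ (G.induce Kᶜ).Preconnected

/-- an atom: a connected graph with no clique separator. -/
def IsAtomGraph {V : Type} (G : SimpleGraph V) : Prop :=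
  G.Connected ∧ ¬ HasCliqueSeparator G


instance : DecidableRel paraglider.Adj := fun i j =>
  decidable_of_iff _ (SimpleGraph.fromRel_adj _ i j).symm

private lemma find_para {V : Type} {G : SimpleGraph V}
    (a b c d e : V)
    (hab : G.Adj a b) (hac : G.Adj a c) (had : G.Adj a d)
    (hbc : G.Adj b c) (hbd : G.Adj b d)
    (hec : G.Adj e c) (hed : G.Adj e d)
    (hcd : ¬ G.Adj c d) (hae : ¬ G.Adj a e) (hbe : ¬ G.Adj b e)
    (hcd' : c ≠ d) (hae' : a ≠ e) (hbe' : b ≠ e) :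
    HasInducedCopy G paraglider := by
  refine ⟨⟨⟨![a,b,c,d,e], ?_⟩, ?_⟩⟩
  · intro i j hij
    fin_cases i <;> fin_cases j <;>
      simp_all [hab.ne, hac.ne, had.ne, hbc.ne, hbd.ne, hec.ne, hed.ne,
        hab.ne', hac.ne', had.ne', hbc.ne', hbd.ne', hec.ne', hed.ne',
        hcd', hae', hbe', hcd'.symm, hae'.symm, hbe'.symm]
  · intro i j
    fin_cases i <;> fin_cases j <;>
      first
      | exact iff_of_true (by assumption) (by decide)
      | exact iff_of_true (SimpleGraph.Adj.symm (by assumption)) (by decide)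
      | exact iff_of_false (by assumption) (by decide)
      | exact iff_of_false (fun h => (by assumption : ¬ G.Adj _ _) h.symm) (by decide)
      | exact iff_of_false (G.irrefl) (by decide)

private lemma find_c5 {V : Type} {G : SimpleGraph V}
    (a b c d e : V)
    (hab : G.Adj a b) (hbc : G.Adj b c) (hcd : G.Adj c d) (hde : G.Adj d e) (hea : G.Adj e a)
    (hac : ¬ G.Adj a c) (had : ¬ G.Adj a d) (hbd : ¬ G.Adj b d) (hbe : ¬ G.Adj b e)
    (hce : ¬ G.Adj c e)
    (hac' : a ≠ c) (had' : a ≠ d) (hbd' : b ≠ d) (hbe' : b ≠ e) (hce' : c ≠ e) :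
    HasInducedCopy G (cycleGraph 5) := by
  refine ⟨⟨⟨![a,b,c,d,e], ?_⟩, ?_⟩⟩
  · intro i j hij
    fin_cases i <;> fin_cases j <;>
      simp_all [hab.ne, hbc.ne, hcd.ne, hde.ne, hea.ne,
        hab.ne', hbc.ne', hcd.ne', hde.ne', hea.ne',
        hac', had', hbd', hbe', hce', hac'.symm, had'.symm, hbd'.symm, hbe'.symm, hce'.symm]
  · intro i j
    fin_cases i <;> fin_cases j <;>
      first
      | exact iff_of_true (by assumption) (by decide)
      | exact iff_of_true (SimpleGraph.Adj.symm (by assumption)) (by decide)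
      | exact iff_of_false (by assumption) (by decide)
      | exact iff_of_false (fun h => (by assumption : ¬ G.Adj _ _) h.symm) (by decide)
      | exact iff_of_false (G.irrefl) (by decide)

private lemma key_no_consec {V : Type} {G : SimpleGraph V}
    (hHole : HoleFree G) (hPara : ¬ HasInducedCopy G paraglider)
    (f : (cycleGraph 6)ᶜ ↪g G)
    (x : V) (hx : x ∉ Set.range ⇑f)
    (h3 : {i : Fin 6 | G.Adj x (f i)}.ncard = 3)
    (a : Fin 6) (ha : G.Adj x (f a)) (ha1 : G.Adj x (f (a+1))) : False := by
  have hxf : ∀ m : Fin 6, x ≠ f m := fun m h => hx ⟨m, h.symm⟩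
  have hfne : ∀ m n : Fin 6, m ≠ n → f m ≠ f n := fun m n h => f.injective.ne h
  have hA : ∀ m n : Fin 6, ((cycleGraph 6)ᶜ).Adj m n → G.Adj (f m) (f n) :=
    fun m n h => f.map_adj_iff.2 h
  have hNA : ∀ m n : Fin 6, ¬ ((cycleGraph 6)ᶜ).Adj m n → ¬ G.Adj (f m) (f n) :=
    fun m n h h' => h (f.map_adj_iff.1 h')
  -- decidable facts about `Fin 6` and `(cycleGraph 6)ᶜ`
  have ne1 : ∀ a : Fin 6, a ≠ a + 1 := by decide
  have d_a2 : ∀ a : Fin 6, ((cycleGraph 6)ᶜ).Adj a (a+2) := by decide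
  have d_a3 : ∀ a : Fin 6, ((cycleGraph 6)ᶜ).Adj a (a+3) := by decide
  have d_a4 : ∀ a : Fin 6, ((cycleGraph 6)ᶜ).Adj a (a+4) := by decide
  have d_24 : ∀ a : Fin 6, ((cycleGraph 6)ᶜ).Adj (a+2) (a+4) := by decide
  have d_14 : ∀ a : Fin 6, ((cycleGraph 6)ᶜ).Adj (a+1) (a+4) := by decide
  have d_25 : ∀ a : Fin 6, ((cycleGraph 6)ᶜ).Adj (a+2) (a+5) := by decide
  have d_51 : ∀ a : Fin 6, ((cycleGraph 6)ᶜ).Adj (a+5) (a+1) := by decide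
  have d_15 : ∀ a : Fin 6, ((cycleGraph 6)ᶜ).Adj (a+1) (a+5) := by decide
  have d_52 : ∀ a : Fin 6, ((cycleGraph 6)ᶜ).Adj (a+5) (a+2) := by decide
  have d_2a : ∀ a : Fin 6, ((cycleGraph 6)ᶜ).Adj (a+2) a := by decide
  have d_53 : ∀ a : Fin 6, ((cycleGraph 6)ᶜ).Adj (a+5) (a+3) := by decide
  have d_13 : ∀ a : Fin 6, ((cycleGraph 6)ᶜ).Adj (a+1) (a+3) := by decide
  have n_01 : ∀ a : Fin 6, ¬ ((cycleGraph 6)ᶜ).Adj a (a+1) := by decide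
  have n_21 : ∀ a : Fin 6, ¬ ((cycleGraph 6)ᶜ).Adj (a+2) (a+1) := by decide
  have n_05 : ∀ a : Fin 6, ¬ ((cycleGraph 6)ᶜ).Adj a (a+5) := by decide
  have n_12 : ∀ a : Fin 6, ¬ ((cycleGraph 6)ᶜ).Adj (a+1) (a+2) := by decide
  have n_1a : ∀ a : Fin 6, ¬ ((cycleGraph 6)ᶜ).Adj (a+1) a := by decide
  have n_5a : ∀ a : Fin 6, ¬ ((cycleGraph 6)ᶜ).Adj (a+5) a := by decide
  have e_20 : ∀ a : Fin 6, a + 2 ≠ a := by decide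
  have e_21 : ∀ a : Fin 6, a + 2 ≠ a + 1 := by decide
  have e_23 : ∀ a : Fin 6, a + 2 ≠ a + 3 := by decide
  have e_24 : ∀ a : Fin 6, a + 2 ≠ a + 4 := by decide
  have e_30 : ∀ a : Fin 6, a + 3 ≠ a := by decide
  have e_31 : ∀ a : Fin 6, a + 3 ≠ a + 1 := by decide
  have e_35 : ∀ a : Fin 6, a + 3 ≠ a + 5 := by decide
  have e_40 : ∀ a : Fin 6, a + 4 ≠ a := by decide
  have e_41 : ∀ a : Fin 6, a + 4 ≠ a + 1 := by decide
  have e_42 : ∀ a : Fin 6, a + 4 ≠ a + 2 := by decide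
  have e_50 : ∀ a : Fin 6, a + 5 ≠ a := by decide
  have e_51 : ∀ a : Fin 6, a + 5 ≠ a + 1 := by decide
  have e_53 : ∀ a : Fin 6, a + 5 ≠ a + 3 := by decide
  have e_54 : ∀ a : Fin 6, a + 5 ≠ a + 4 := by decide
  have e_0s : ∀ a : Fin 6, a ≠ a + 5 := by decide
  have e_12 : ∀ a : Fin 6, a + 1 ≠ a + 2 := by decide
  have e_15 : ∀ a : Fin 6, a + 1 ≠ a + 5 := by decide
  have e_10 : ∀ a : Fin 6, a + 1 ≠ a := by decide
  -- there is a third neighbor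
  obtain ⟨k, hk, hka, hka1⟩ : ∃ k, G.Adj x (f k) ∧ k ≠ a ∧ k ≠ a + 1 := by
    by_contra h
    push_neg at h
    have hsub : {i : Fin 6 | G.Adj x (f i)} ⊆ {a, a+1} := by
      intro i hi
      by_cases h' : i = a
      · exact Or.inl h'
      · exact Or.inr (h i hi h')
    have h2 : ({a, a+1} : Set (Fin 6)).ncard = 2 := Set.ncard_pair (ne1 a)
    have := Set.ncard_le_ncard hsub (Set.toFinite _)
    omega
  -- the neighbor set is exactly {a, a+1, k}
  have hS : {i : Fin 6 | G.Adj x (f i)} = {a, a+1, k} := by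
    have h1 : (a : Fin 6) ∉ ({a+1, k} : Set (Fin 6)) := by
      intro h
      rcases h with h | h
      · exact ne1 a h
      · exact hka h.symm
    have h2 : (a+1 : Fin 6) ∉ ({k} : Set (Fin 6)) := fun h => hka1 (Set.mem_singleton_iff.1 h).symm
    have htriple : ({a, a+1, k} : Set (Fin 6)).ncard = 3 := by
      rw [Set.ncard_insert_of_notMem h1 (Set.toFinite _),
        Set.ncard_insert_of_notMem h2 (Set.toFinite _), Set.ncard_singleton]
    refine (Set.eq_of_subset_of_ncard_le ?_ ?_ (Set.toFinite _)).symm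
    · intro i hi
      rcases hi with h' | h' | h' <;> subst h' <;> assumption
    · rw [h3, htriple]
  have hnot : ∀ m : Fin 6, m ≠ a → m ≠ a+1 → m ≠ k → ¬ G.Adj x (f m) := by
    intro m h1 h2 h3' hm
    have : m ∈ {i : Fin 6 | G.Adj x (f i)} := hm
    rw [hS] at this
    rcases this with h | h | h <;> [exact h1 h; exact h2 h; exact h3' h]
  have hk4' : ∀ a k : Fin 6, k ≠ a → k ≠ a+1 → (k = a+2 ∨ k = a+3 ∨ k = a+4 ∨ k = a+5) := by
    decide
  rcases hk4' a k hka hka1 with rfl | rfl | rfl | rfl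
  · -- S = {a, a+1, a+2} : paraglider (f a, f (a+2), x, f (a+4), f (a+1))
    exact hPara (find_para (f a) (f (a+2)) x (f (a+4)) (f (a+1))
      (hA _ _ (d_a2 a)) ha.symm (hA _ _ (d_a4 a))
      hk.symm (hA _ _ (d_24 a))
      ha1.symm (hA _ _ (d_14 a))
      (hnot (a+4) (e_40 a) (e_41 a) (e_42 a))
      (hNA _ _ (n_01 a)) (hNA _ _ (n_21 a))
      (hxf _) (hfne _ _ (ne1 a)) (hfne _ _ (e_21 a)))
  · -- S = {a, a+1, a+3} : hole (x, f a, f (a+2), f (a+5), f (a+1))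
    exact hHole 5 (by norm_num) (find_c5 x (f a) (f (a+2)) (f (a+5)) (f (a+1))
      ha (hA _ _ (d_a2 a)) (hA _ _ (d_25 a))
      (hA _ _ (d_51 a)) ha1.symm
      (hnot (a+2) (e_20 a) (e_21 a) (e_23 a))
      (hnot (a+5) (e_50 a) (e_51 a) (e_53 a))
      (hNA _ _ (n_05 a)) (hNA _ _ (n_01 a))
      (hNA _ _ (n_21 a))
      (hxf _) (hxf _) (hfne _ _ (e_0s a)) (hfne _ _ (ne1 a))
      (hfne _ _ (e_21 a)))
  · -- S = {a, a+1, a+4} : hole (x, f (a+1), f (a+5), f (a+2), f a)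
    exact hHole 5 (by norm_num) (find_c5 x (f (a+1)) (f (a+5)) (f (a+2)) (f a)
      ha1 (hA _ _ (d_15 a)) (hA _ _ (d_52 a))
      (hA _ _ (d_2a a)) ha.symm
      (hnot (a+5) (e_50 a) (e_51 a) (e_54 a))
      (hnot (a+2) (e_20 a) (e_21 a) (e_24 a))
      (hNA _ _ (n_12 a)) (hNA _ _ (n_1a a))
      (hNA _ _ (n_5a a))
      (hxf _) (hxf _) (hfne _ _ (e_12 a)) (hfne _ _ (e_10 a))
      (hfne _ _ (e_50 a)))
  · -- S = {a+5, a, a+1} : paraglider (f (a+5), f (a+1), x, f (a+3), f a)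
    exact hPara (find_para (f (a+5)) (f (a+1)) x (f (a+3)) (f a)
      (hA _ _ (d_51 a)) hk.symm (hA _ _ (d_53 a))
      ha1.symm (hA _ _ (d_13 a))
      ha.symm (hA _ _ (d_a3 a))
      (hnot (a+3) (e_30 a) (e_31 a) (e_35 a))
      (hNA _ _ (n_5a a)) (hNA _ _ (n_1a a))
      (hxf _) (hfne _ _ (e_50 a)) (hfne _ _ (e_10 a)))

/-- the three `A`-neighbors of a vertex in `A₃` form a triangle. -/
theorem A3_neighbors_triangle {V : Type} (G : SimpleGraph V)
    (hHole : HoleFree G) (hPara : ¬ HasInducedCopy G paraglider)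
    (f : (cycleGraph 6)ᶜ ↪g G)
    (x : V) (hx : x ∉ Set.range ⇑f)
    (h3 : {i : Fin 6 | G.Adj x (f i)}.ncard = 3) :
    ∀ i j : Fin 6, G.Adj x (f i) → G.Adj x (f j) → i ≠ j → G.Adj (f i) (f j) := by
  intro i j hi hj hij
  by_contra hadj
  have hcadj : ¬ ((cycleGraph 6)ᶜ).Adj i j := fun h => hadj (f.map_adj_iff.2 h)
  have hcyc : (cycleGraph 6).Adj i j := by
    rcases (em ((cycleGraph 6).Adj i j)) with h | h
    · exact h
    · exact absurd ⟨hij, h⟩ hcadj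
  have hcon' : ∀ i j : Fin 6, (cycleGraph 6).Adj i j → (j = i + 1 ∨ i = j + 1) := by decide
  have hcon : j = i + 1 ∨ i = j + 1 := hcon' i j hcyc
  rcases hcon with rfl | rfl
  · exact key_no_consec hHole hPara f x hx h3 i hi hj
  · exact key_no_consec hHole hPara f x hx h3 j hj hi
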